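/- arXiv:1906.10857 — 4 statements merged into one kernel-verified Lean document; each statement's English description precedes it below -/
import Mathlib

section
/- Let P be a probability distribution on a finite set S, let x ∈ S with P(x) ≤ 1/2, let ζ > 0, and let G be the number of i.i.d. draws from P until x appears. Then log₂ E[G^ζ] ≥ -ζ log₂ P(x) - log₂(e² 2^ζ). -/
/-! If `G` is geometric with success probability `q ≤ 1/2`, then `G` exceeds `m = ⌊1/(2q)⌋`
with probability `(1 - q)^m ≥ e^{-2qm} ≥ e^{-1}`, and on that event `G^ζ ≥ (m + 1)^ζ ≥ (2q)^{-ζ}`.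
Hence `E[G^ζ] ≥ e^{-1} (2q)^{-ζ}`, which is more than the claim after taking `log₂`. -/

open Real

lemma summable_add_one_rpow_mul_geometric {r : ℝ} (hr0 : 0 < r) (hr1 : r < 1) (ζ : ℝ) :
    Summable fun k : ℕ => ((k : ℝ) + 1) ^ ζ * r ^ k := by
  have hnat : Summable fun k : ℕ => (k : ℝ) ^ ⌈ζ⌉₊ * r ^ k :=
    summable_pow_mul_geometric_of_norm_lt_one _ (by rwa [norm_of_nonneg hr0.le])
  have hpow : Summable fun k : ℕ => ((k : ℝ) + 1) ^ ⌈ζ⌉₊ * r ^ k := by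
    rw [← summable_mul_left_iff hr0.ne']
    refine ((summable_nat_add_iff 1).mpr hnat).congr fun k => ?_
    push_cast
    ring
  refine hpow.of_nonneg_of_le (fun k => by positivity) fun k => ?_
  have hk : (1 : ℝ) ≤ k + 1 := by linarith [k.cast_nonneg (α := ℝ)]
  rw [← rpow_natCast _ ⌈ζ⌉₊]
  exact mul_le_mul_of_nonneg_right (rpow_le_rpow_of_exponent_le hk (Nat.le_ceil ζ)) (by positivity)

lemma add_one_rpow_mul_pow_le_tsum {q ζ : ℝ} (hq0 : 0 < q) (hq1 : q < 1) (hζ : 0 ≤ ζ) (m : ℕ) :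
    ((m : ℝ) + 1) ^ ζ * (1 - q) ^ m ≤ ∑' k : ℕ, ((k : ℝ) + 1) ^ ζ * (1 - q) ^ k * q := by
  set f : ℕ → ℝ := fun k => ((k : ℝ) + 1) ^ ζ * (1 - q) ^ k * q
  have hf : Summable f :=
    (summable_add_one_rpow_mul_geometric (by linarith) (by linarith) ζ).mul_right q
  have hterm (i : ℕ) : ((m : ℝ) + 1) ^ ζ * (1 - q) ^ m * q * (1 - q) ^ i ≤ f (i + m) := by
    calc ((m : ℝ) + 1) ^ ζ * (1 - q) ^ m * q * (1 - q) ^ i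
        = ((m : ℝ) + 1) ^ ζ * ((1 - q) ^ (i + m) * q) := by ring
      _ ≤ ((i : ℝ) + m + 1) ^ ζ * ((1 - q) ^ (i + m) * q) := by
        have : 0 < 1 - q := by linarith
        gcongr
        linarith [i.cast_nonneg (α := ℝ)]
      _ = f (i + m) := by simp only [f]; push_cast; ring
  calc ((m : ℝ) + 1) ^ ζ * (1 - q) ^ m
      = ∑' i : ℕ, ((m : ℝ) + 1) ^ ζ * (1 - q) ^ m * q * (1 - q) ^ i := by
        rw [tsum_mul_left, tsum_geometric_of_lt_one (by linarith) (by linarith), sub_sub_cancel]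
        field_simp
    _ ≤ ∑' i, f (i + m) :=
      Summable.tsum_le_tsum hterm ((summable_geometric_of_lt_one (by linarith) (by linarith)).mul_left _)
        ((summable_nat_add_iff m).mpr hf)
    _ ≤ ∑' k, f k := by
      rw [← hf.sum_add_tsum_nat_add m]
      exact le_add_of_nonneg_left (Finset.sum_nonneg fun k _ => by positivity)

lemma exp_neg_two_mul_le_one_sub {q : ℝ} (hq0 : 0 ≤ q) (hq : q ≤ 1 / 2) :
    exp (-(2 * q)) ≤ 1 - q := by
  rw [exp_neg, inv_le_iff_one_le_mul₀ (exp_pos _)]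
  nlinarith [mul_le_mul_of_nonneg_left (add_one_le_exp (2 * q)) (by linarith : (0 : ℝ) ≤ 1 - q)]

theorem geometric_moment_lower_bound {q ζ : ℝ} (hq0 : 0 < q) (hq : q ≤ 1 / 2) (hζ : 0 ≤ ζ) :
    exp (-1) * (2 * q) ^ (-ζ) ≤ ∑' k : ℕ, ((k : ℝ) + 1) ^ ζ * (1 - q) ^ k * q := by
  set m := ⌊1 / (2 * q)⌋₊
  have hm : (m : ℝ) * (2 * q) ≤ 1 :=
    (le_div_iff₀ (by positivity)).mp (Nat.floor_le (by positivity))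
  have hpow : (2 * q) ^ (-ζ) ≤ ((m : ℝ) + 1) ^ ζ := by
    rw [rpow_neg (by positivity), ← inv_rpow (by positivity), ← one_div]
    exact rpow_le_rpow (by positivity) (Nat.lt_floor_add_one _).le hζ
  have hsurvival : exp (-1) ≤ (1 - q) ^ m :=
    calc exp (-1) ≤ exp (m * -(2 * q)) := exp_le_exp.mpr (by linarith)
      _ = exp (-(2 * q)) ^ m := exp_nat_mul _ m
      _ ≤ (1 - q) ^ m := pow_le_pow_left₀ (exp_pos _).le (exp_neg_two_mul_le_one_sub hq0.le hq) m
  calc exp (-1) * (2 * q) ^ (-ζ) ≤ (1 - q) ^ m * ((m : ℝ) + 1) ^ ζ :=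
        mul_le_mul hsurvival hpow (by positivity) (by linarith [exp_pos (-1)])
    _ = ((m : ℝ) + 1) ^ ζ * (1 - q) ^ m := mul_comm _ _
    _ ≤ _ := add_one_rpow_mul_pow_le_tsum hq0 (by linarith) hζ m

/-- The series is `E[G^ζ]`, summed over `k = G - 1`. -/
theorem log_guessing_moment_lower_bound_general {S : Type*}
    (p : S → ℝ)
    (x : S) (hx0 : 0 < p x) (hx : p x ≤ 1 / 2) (ζ : ℝ) (hζ : 0 < ζ) :
    Real.logb 2 (∑' k : ℕ, ((k : ℝ) + 1) ^ ζ * (1 - p x) ^ k * p x) ≥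
      -ζ * Real.logb 2 (p x) - Real.logb 2 (Real.exp 2 * (2 : ℝ) ^ ζ) := by
  have hbound : p x ^ (-ζ) / (exp 2 * 2 ^ ζ) ≤
      ∑' k : ℕ, ((k : ℝ) + 1) ^ ζ * (1 - p x) ^ k * p x :=
    calc p x ^ (-ζ) / (exp 2 * 2 ^ ζ) = exp (-2) * (2 * p x) ^ (-ζ) := by
          rw [mul_rpow zero_le_two hx0.le, rpow_neg (x := 2) zero_le_two, rpow_neg hx0.le, exp_neg]
          field_simp
      _ ≤ exp (-1) * (2 * p x) ^ (-ζ) := by gcongr; norm_num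
      _ ≤ _ := geometric_moment_lower_bound hx0 hx hζ.le
  calc -ζ * logb 2 (p x) - logb 2 (exp 2 * 2 ^ ζ) = logb 2 (p x ^ (-ζ) / (exp 2 * 2 ^ ζ)) := by
        rw [logb_div (by positivity) (by positivity), logb_rpow_eq_mul_logb_of_pos hx0]
    _ ≤ _ := logb_le_logb_of_le one_lt_two (by positivity) hbound

/-- Let `p` be a probability distribution on a finite set `S`, `x ∈ S` with
`0 < p x ≤ 1/2`, and let `G` be the number of i.i.d. draws from `p` until `x`
appears, so that `E[G^ζ] = ∑_{k=1}^∞ k^ζ (1 - p x)^{k-1} (p x)`.  Then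
`log₂ E[G^ζ] ≥ -ζ log₂ p(x) - log₂(e² 2^ζ)`. -/
theorem log_guessing_moment_lower_bound {S : Type*} [Fintype S]
    (p : S → ℝ) (hp0 : ∀ s, 0 ≤ p s) (hp1 : ∑ s, p s = 1)
    (x : S) (hx0 : 0 < p x) (hx : p x ≤ 1 / 2) (ζ : ℝ) (hζ : 0 < ζ) :
    Real.logb 2 (∑' k : ℕ, ((k : ℝ) + 1) ^ ζ * (1 - p x) ^ k * p x) ≥
      -ζ * Real.logb 2 (p x) - Real.logb 2 (Real.exp 2 * (2 : ℝ) ^ ζ) :=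
  log_guessing_moment_lower_bound_general p x hx0 hx ζ hζ
end

section
/- Let α ≥ 2 be an integer alphabet size and x^n a string of length n over an alphabet of size α, and let c(x^n) be the maximum number of distinct phrases in any parsing of x^n into distinct strings. Then c(x^n) ≤ n·log₂α / ((1-ε_n)·log₂ n) for some sequence ε_n → 0 independent of x^n. -/
/-!
Split the phrases at a length cutoff `m`. The distinct phrases of length at most `m` number at
most `(m + 1) α ^ m`, and the longer ones have total length at most `n`, so there are at most
`n / (m + 1)` of them. The cutoff `m = ⌊log_α (n / (log_α n) ^ 3)⌋` makes the first count
`O(n / (log_α n) ^ 2)` and the second `(1 + O(log log n / log n)) · n / log_α n`.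
-/

open Filter Real Topology

namespace List

variable {X : Type*}

theorem Nodup.length_le_of_forall_length_le [Fintype X] [Nonempty X] {L : List (List X)}
    (hL : L.Nodup) {m : ℕ} (h : ∀ w ∈ L, w.length ≤ m) :
    L.length ≤ (m + 1) * Fintype.card X ^ m := by
  classical
  rw [← toFinset_card_of_nodup hL,
    Finset.card_eq_sum_card_fiberwise (f := length) (t := Finset.range (m + 1))
      (fun w hw => Finset.mem_range_succ_iff.2 (h w (mem_toFinset.1 hw)))]
  calc ∑ k ∈ Finset.range (m + 1), (L.toFinset.filter (·.length = k)).card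
      ≤ ∑ k ∈ Finset.range (m + 1), Fintype.card X ^ m :=
        Finset.sum_le_sum fun k hk => Finset.card_filter_length_eq_le.trans <|
          Nat.pow_le_pow_right Fintype.card_pos (Finset.mem_range_succ_iff.1 hk)
    _ = (m + 1) * Fintype.card X ^ m := by simp

theorem mul_length_le_length_flatten {L : List (List X)} {m : ℕ} (h : ∀ w ∈ L, m ≤ w.length) :
    m * L.length ≤ L.flatten.length := by
  rw [length_flatten, mul_comm, ← smul_eq_mul, ← length_map (f := length)]
  exact card_nsmul_le_sum _ _ (by simpa using h)

end List

namespace LempelZiv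

noncomputable def phraseBound (A x : ℝ) (m : ℕ) : ℝ := (m + 1) * A ^ m + x / (m + 1)

noncomputable def phraseCutoff (A x : ℝ) : ℕ := ⌊logb A (x / logb A x ^ 3)⌋₊

noncomputable def phraseSlack (A x : ℝ) : ℝ :=
  (logb A x)⁻¹ + (logb A x)⁻¹ ^ 2 + (1 - 3 * (logb A (logb A x) / logb A x))⁻¹

theorem length_le_phraseBound {X : Type*} [Fintype X] [Nonempty X] {L : List (List X)}
    (hL : L.Nodup) (m : ℕ) :
    (L.length : ℝ) ≤ phraseBound (Fintype.card X) L.flatten.length m := by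
  set short := L.filter (·.length ≤ m)
  set long := L.filter fun w => !decide (w.length ≤ m)
  have h_short : short.length ≤ (m + 1) * Fintype.card X ^ m :=
    (hL.filter _).length_le_of_forall_length_le fun w hw => by simpa using List.of_mem_filter hw
  have h_long : (m + 1) * long.length ≤ L.flatten.length :=
    (List.mul_length_le_length_flatten fun w hw => by simpa using List.of_mem_filter hw).trans
      List.filter_sublist.flatten.length_le
  have h_long' : (long.length : ℝ) ≤ L.flatten.length / (m + 1) := by
    rw [le_div_iff₀ (by positivity), mul_comm]
    exact_mod_cast h_long
  rw [List.length_eq_length_filter_add (·.length ≤ m), phraseBound]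
  push_cast
  exact add_le_add (by exact_mod_cast h_short) h_long'

variable {A : ℝ}

theorem tendsto_logb_logb_div_logb (hA : 1 < A) :
    Tendsto (fun x => logb A (logb A x) / logb A x) atTop (𝓝 0) := by
  have h : Tendsto (fun y => logb A y / y) atTop (𝓝 0) := by
    simpa [logb, div_right_comm] using
      isLittleO_log_id_atTop.tendsto_div_nhds_zero.div_const (log A)
  exact h.comp (tendsto_logb_atTop hA)

theorem tendsto_phraseSlack (hA : 1 < A) : Tendsto (phraseSlack A) atTop (𝓝 1) := by
  have hr := (tendsto_logb_atTop hA).inv_tendsto_atTop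
  have hq := ((tendsto_logb_logb_div_logb hA).const_mul 3).const_sub 1
  convert (hr.add (hr.pow 2)).add (hq.inv₀ (by norm_num)) using 2
  · simp [phraseSlack]
  · norm_num

theorem phraseBound_phraseCutoff_le (hA : 1 < A) {x : ℝ} (hx : 0 < x) (hr : 1 ≤ logb A x)
    (hq : logb A (logb A x) / logb A x < 1 / 3) :
    phraseBound A x (phraseCutoff A x) ≤ phraseSlack A x * x / logb A x := by
  set r := logb A x
  set g := logb A (x / r ^ 3) with hg_def
  have hr0 : 0 < r := by linarith
  have hg : g = r - 3 * logb A r := by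
    rw [hg_def, logb_div hx.ne' (by positivity), logb_pow]
    push_cast
    ring
  have hg0 : 0 < g := by
    rw [div_lt_iff₀ hr0] at hq
    linarith
  have hgr : g ≤ r := by linarith [logb_nonneg hA hr]
  have hmg : (phraseCutoff A x : ℝ) ≤ g := Nat.floor_le hg0.le
  have hgm : g < phraseCutoff A x + 1 := Nat.lt_floor_add_one g
  have hpow : A ^ phraseCutoff A x ≤ x / r ^ 3 := by
    calc A ^ phraseCutoff A x = A ^ (phraseCutoff A x : ℝ) := (rpow_natCast A _).symm
      _ ≤ A ^ g := rpow_le_rpow_of_exponent_le hA.le hmg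
      _ = x / r ^ 3 := rpow_logb (by linarith) hA.ne' (by positivity)
  have hslack : 1 - 3 * (logb A r / r) = g / r := by
    rw [hg]
    field_simp
  calc phraseBound A x (phraseCutoff A x) ≤ (r + 1) * (x / r ^ 3) + x / g := by
        unfold phraseBound
        gcongr
        linarith
    _ = phraseSlack A x * x / r := by
        change _ = (r⁻¹ + r⁻¹ ^ 2 + (1 - 3 * (logb A r / r))⁻¹) * x / r
        rw [hslack, inv_div]
        field_simp

theorem eventually_phraseBound_phraseCutoff_le (hA : 1 < A) :
    ∀ᶠ x in atTop, phraseBound A x (phraseCutoff A x) ≤ phraseSlack A x * x / logb A x := by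
  filter_upwards [eventually_gt_atTop 0, (tendsto_logb_atTop hA).eventually_ge_atTop 1,
    (tendsto_logb_logb_div_logb hA).eventually (gt_mem_nhds (by norm_num : (0 : ℝ) < 1 / 3))] with x hx hr hq
  exact phraseBound_phraseCutoff_le hA hx hr hq

end LempelZiv

open LempelZiv

/-- Lempel–Ziv bound on the number of distinct phrases: over an alphabet of size
`α ≥ 2` there is a sequence `ε_n → 0` (independent of the string) such that, for all
large `n`, every parsing of a string of length `n` into distinct (nonempty) phrases
has at most `n·log₂α / ((1-ε_n)·log₂ n)` phrases. -/
theorem distinct_phrases_upper_bound {X : Type*} [Fintype X]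
    (hα : 2 ≤ Fintype.card X) :
    ∃ (ε : ℕ → ℝ) (N : ℕ), Filter.Tendsto ε Filter.atTop (nhds 0) ∧
      ∀ n ≥ N, ∀ x : Fin n → X, ∀ L : List (List X),
        L.flatten = List.ofFn x → L.Nodup → (∀ w ∈ L, w ≠ []) →
        (L.length : ℝ) ≤
          (n : ℝ) * Real.logb 2 (Fintype.card X) / ((1 - ε n) * Real.logb 2 n) := by
  have : Nonempty X := Fintype.card_pos_iff.1 (by omega)
  have hA : (1 : ℝ) < Fintype.card X := by exact_mod_cast hα
  obtain ⟨N, hN⟩ := eventually_atTop.1 <|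
    tendsto_natCast_atTop_atTop.eventually (eventually_phraseBound_phraseCutoff_le hA)
  have hslack := (tendsto_phraseSlack hA).comp tendsto_natCast_atTop_atTop
  refine ⟨fun n => 1 - (phraseSlack (Fintype.card X) n)⁻¹, N,
    by simpa using (hslack.inv₀ one_ne_zero).const_sub 1, fun n hn x L hx hL _ => ?_⟩
  have hlen : L.flatten.length = n := by rw [hx, List.length_ofFn]
  calc (L.length : ℝ) ≤ phraseBound (Fintype.card X) n (phraseCutoff (Fintype.card X) n) := by
        simpa only [hlen] using length_le_phraseBound hL _
    _ ≤ phraseSlack (Fintype.card X) n * n / logb (Fintype.card X) n := hN n hn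
    _ = _ := by
        rw [sub_sub_cancel]
        simp only [logb]
        field_simp
end

section
/- Consider a hidden Markov (non-unifilar finite-state) source with s states: P(x^n) = ∑_{z_2,...,z_{n+1}} ∏_{i=1}^n P(x_i, z_{i+1} | z_i) with fixed initial state z_1. Let ℓ divide n, m = n/ℓ, and let Ĥ_ℓ(x^n) be the empirical entropy (in bits) of the non-overlapping ℓ-blocks of x^n. Then -log₂ P(x^n) ≥ m·[Ĥ_ℓ(x^n) - log₂(s³e)]. -/
/-!
Write `M a` for the matrix `(T z a z')_{z z'}`, so that `P(xⁿ)` is the `z₁`-row sum of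
`M x₁ ⋯ M xₙ`. For entrywise nonnegative matrices a row sum of a product is at most the product
of the total entry sums of the factors; grouping the factors into the `m` blocks gives
`P(xⁿ) ≤ ∏ₖ W(bₖ)`, where `W(b)` is the total entry sum of `M b₁ ⋯ M b_ℓ`. As `∑ₐ M a` is
row-stochastic, `∑_b W(b) = s`, and weighted AM-GM (the maximum-likelihood bound for types)
gives `∏ₖ W(bₖ) ≤ s^m ∏_b (c_b/m)^{c_b} = s^m 2^{-m Ĥ_ℓ(xⁿ)}`, `c_b` being the number of
blocks equal to `b`.
-/

open Finset

theorem Fintype.sum_pow_noncomm {X A : Type*} [Fintype X] [Semiring A] (f : X → A) (ℓ : ℕ) :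
    (∑ a, f a) ^ ℓ = ∑ b : Fin ℓ → X, (List.ofFn fun j => f (b j)).prod := by
  induction ℓ with
  | zero => simp
  | succ ℓ ih =>
    rw [pow_succ', ih, Finset.sum_mul_sum, ← (Fin.consEquiv fun _ => X).sum_comp,
      Fintype.sum_prod_type]
    simp [Fin.consEquiv, List.ofFn_succ]

theorem List.prod_ofFn_finProdFinEquiv {M : Type*} [Monoid M] {m ℓ : ℕ} (f : Fin (m * ℓ) → M) :
    (List.ofFn f).prod =
      (List.ofFn fun k : Fin m =>
        (List.ofFn fun j : Fin ℓ => f (finProdFinEquiv (k, j))).prod).prod := by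
  rw [List.ofFn_mul, List.prod_flatten, List.map_ofFn]
  congr! with k j
  simp [finProdFinEquiv, Nat.add_comm, Nat.mul_comm]

namespace Matrix

variable {n R : Type*} [Fintype n] [DecidableEq n]

theorem sum_list_prod_ofFn_apply [CommSemiring R] {k : ℕ} (M : Fin k → Matrix n n R) (z : n) :
    ∑ z', (List.ofFn M).prod z z' =
      ∑ zs : Fin k → n, ∏ i, M i ((Fin.cons z zs : Fin (k + 1) → n) i.castSucc)
        ((Fin.cons z zs : Fin (k + 1) → n) i.succ) := by
  induction k generalizing z with
  | zero => simp [one_apply]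
  | succ k ih =>
    rw [← (Fin.consEquiv fun _ => n).sum_comp, Fintype.sum_prod_type]
    simp only [List.ofFn_succ, List.prod_cons, mul_apply, Fin.prod_univ_succ, ← Fin.succ_castSucc,
      Fin.consEquiv_apply, Fin.cons_zero, Fin.castSucc_zero, Fin.cons_succ]
    rw [Finset.sum_comm]
    refine Finset.sum_congr rfl fun w _ => ?_
    rw [← Finset.mul_sum, ih, Finset.mul_sum]
    simp

section OrderedSemiring

variable [CommSemiring R] [PartialOrder R] [IsOrderedRing R]

theorem list_prod_nonneg (L : List (Matrix n n R)) (hL : ∀ A ∈ L, ∀ i j, 0 ≤ A i j) (i j : n) :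
    0 ≤ L.prod i j := by
  induction L generalizing i with
  | nil => by_cases h : i = j <;> simp [h]
  | cons A L ih =>
    rw [List.prod_cons, mul_apply]
    exact sum_nonneg fun w _ => mul_nonneg (hL A List.mem_cons_self i w)
      (ih (fun B hB => hL B (List.mem_cons_of_mem _ hB)) w)

theorem sum_list_prod_apply_le (L : List (Matrix n n R)) (hL : ∀ A ∈ L, ∀ i j, 0 ≤ A i j) (z : n) :
    ∑ z', L.prod z z' ≤ (L.map fun A => ∑ i, ∑ j, A i j).prod := by
  induction L generalizing z with
  | nil => simp [one_apply]
  | cons A L ih =>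
    have hA := hL A List.mem_cons_self
    have hC : 0 ≤ (L.map fun A => ∑ i, ∑ j, A i j).prod :=
      List.prod_nonneg fun _ h => by
        obtain ⟨B, hB, rfl⟩ := List.mem_map.1 h
        exact sum_nonneg fun i _ => sum_nonneg fun j _ => hL B (List.mem_cons_of_mem _ hB) i j
    calc ∑ z', (A :: L).prod z z' = ∑ w, A z w * ∑ z', L.prod w z' := by
          simp only [List.prod_cons, mul_apply, Finset.mul_sum]
          exact Finset.sum_comm
      _ ≤ ∑ w, A z w * (L.map fun A => ∑ i, ∑ j, A i j).prod := by
          gcongr with w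
          · exact hA z w
          · exact ih (fun B hB => hL B (List.mem_cons_of_mem _ hB)) w
      _ ≤ _ := by
          rw [List.map_cons, List.prod_cons, ← Finset.sum_mul]
          refine mul_le_mul_of_nonneg_right ?_ hC
          exact single_le_sum (f := fun i => ∑ j, A i j) (fun i _ => sum_nonneg fun j _ => hA i j)
            (mem_univ z)

theorem sum_of_mem_rowStochastic {X : Type*} [Fintype X] (T : n → X → n → R)
    (hT0 : ∀ z a z', 0 ≤ T z a z') (hT1 : ∀ z, ∑ a, ∑ z', T z a z' = 1) :
    ∑ a, of (fun z z' => T z a z') ∈ rowStochastic R n := by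
  refine mem_rowStochastic_iff_sum.2 ⟨fun i j => ?_, fun i => ?_⟩
  · simpa [sum_apply] using sum_nonneg fun a _ => hT0 i a j
  · simp [sum_apply, Finset.sum_comm (γ := n), hT1]

variable {X : Type*} (M : X → Matrix n n R)

def wordWeight {ℓ : ℕ} (b : Fin ℓ → X) : R :=
  ∑ u, ∑ v, (List.ofFn fun j => M (b j)).prod u v

variable {M}

theorem list_prod_ofFn_nonneg (hM : ∀ a i j, 0 ≤ M a i j) {ℓ : ℕ} (b : Fin ℓ → X) (i j : n) :
    0 ≤ (List.ofFn fun k => M (b k)).prod i j :=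
  list_prod_nonneg _ (fun A hA => by
    obtain ⟨k, rfl⟩ := List.mem_ofFn.1 hA
    exact hM _) i j

theorem wordWeight_nonneg (hM : ∀ a i j, 0 ≤ M a i j) {ℓ : ℕ} (b : Fin ℓ → X) :
    0 ≤ wordWeight M b :=
  sum_nonneg fun u _ => sum_nonneg fun v _ => list_prod_ofFn_nonneg hM b u v

theorem sum_wordWeight [Fintype X] (hM : ∑ a, M a ∈ rowStochastic R n) (ℓ : ℕ) :
    ∑ b : Fin ℓ → X, wordWeight M b = Fintype.card n := by
  have hpow := sum_row_of_mem_rowStochastic (pow_mem hM ℓ)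
  simp_rw [Fintype.sum_pow_noncomm, sum_apply] at hpow
  simp_rw [wordWeight, Finset.sum_comm (γ := Fin ℓ → X), hpow]
  simp

theorem sum_list_prod_ofFn_apply_le_prod_wordWeight (hM : ∀ a i j, 0 ≤ M a i j) {m ℓ : ℕ}
    (x : Fin (m * ℓ) → X) (z : n) :
    ∑ z', (List.ofFn fun i => M (x i)).prod z z' ≤
      ∏ k, wordWeight M fun j => x (finProdFinEquiv (k, j)) := by
  rw [List.prod_ofFn_finProdFinEquiv]
  refine (sum_list_prod_apply_le _ (fun A hA => ?_) z).trans_eq ?_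
  · obtain ⟨k, rfl⟩ := List.mem_ofFn.1 hA
    exact list_prod_ofFn_nonneg hM _
  · rw [List.map_ofFn, List.prod_ofFn]
    rfl

end OrderedSemiring

end Matrix

namespace Real

theorem prod_pow_le_sum_pow_mul_prod_div_pow {ι : Type*} (s : Finset ι) (g : ι → ℝ)
    (c : ι → ℕ) (hg : ∀ i ∈ s, 0 ≤ g i) :
    ∏ i ∈ s, g i ^ c i ≤
      (∑ i ∈ s, g i) ^ (∑ i ∈ s, c i) * ∏ i ∈ s, ((c i : ℝ) / ∑ j ∈ s, c j) ^ c i := by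
  set N := ∑ i ∈ s, c i
  rcases Nat.eq_zero_or_pos N with hN | hN
  · have hc : ∀ i ∈ s, c i = 0 := Finset.sum_eq_zero_iff.1 hN
    rw [prod_eq_one fun i hi => by rw [hc i hi, pow_zero],
      prod_eq_one fun i hi => by rw [hc i hi, pow_zero], hN, pow_zero, mul_one]
  set w : ι → ℝ := fun i => c i / N
  have hw : ∀ i ∈ s, 0 ≤ w i := fun i _ => by positivity
  have hw1 : ∑ i ∈ s, w i = 1 := by
    rw [← Finset.sum_div, ← Nat.cast_sum, div_self (by positivity)]
  have hwN : ∀ i, w i * N = c i := fun i => div_mul_cancel₀ _ (by positivity)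
  have amgm : ∏ i ∈ s, (g i / w i) ^ w i ≤ ∑ i ∈ s, g i := by
    refine (geom_mean_le_arith_mean_weighted s w _ hw hw1 fun i hi => ?_).trans ?_
    · exact div_nonneg (hg i hi) (hw i hi)
    · refine sum_le_sum fun i hi => ?_
      rcases eq_or_ne (w i) 0 with h | h
      · simp [h, hg i hi]
      · rw [mul_div_cancel₀ _ h]
  calc ∏ i ∈ s, g i ^ c i = (∏ i ∈ s, (g i / w i) ^ w i) ^ N * ∏ i ∈ s, w i ^ c i := by
        rw [← prod_pow, ← prod_mul_distrib]
        refine prod_congr rfl fun i hi => ?_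
        rw [← rpow_natCast ((g i / w i) ^ w i), ← rpow_mul (div_nonneg (hg i hi) (hw i hi)), hwN,
          rpow_natCast, ← mul_pow]
        rcases eq_or_ne (w i) 0 with h | h
        · have hci : (c i : ℝ) = 0 := by rw [← hwN, h, zero_mul]
          rw [Nat.cast_eq_zero.1 hci, pow_zero, pow_zero]
        · rw [div_mul_cancel₀ _ h]
    _ ≤ (∑ i ∈ s, g i) ^ N * ∏ i ∈ s, w i ^ c i := by
        gcongr
        exact prod_nonneg fun i hi => rpow_nonneg (div_nonneg (hg i hi) (hw i hi)) _

theorem prod_comp_le_sum_pow_card_mul_prod_freq_pow {ι α : Type*} [Fintype ι] [Fintype α]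
    [DecidableEq α] (f : ι → α) (g : α → ℝ) (hg : ∀ a, 0 ≤ g a) :
    ∏ i, g (f i) ≤ (∑ a, g a) ^ Fintype.card ι *
      ∏ a, ((#{i | f i = a} : ℝ) / Fintype.card ι) ^ #{i | f i = a} := by
  have hcard : Fintype.card ι = ∑ a, #{i | f i = a} :=
    card_eq_sum_card_fiberwise fun i _ => mem_univ (f i)
  have hfib : ∏ i, g (f i) = ∏ a, g a ^ #{i | f i = a} := by
    rw [← prod_fiberwise univ f]
    exact prod_congr rfl fun a _ => prod_eq_pow_card fun i hi => by rw [(mem_filter.1 hi).2]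
  rw [hfib, hcard]
  exact prod_pow_le_sum_pow_mul_prod_div_pow univ g _ fun a _ => hg a

theorem two_rpow_mul_sum_mul_logb {α : Type*} [Fintype α] (p : α → ℝ) (c : α → ℕ) {m : ℕ}
    (hm : m ≠ 0) (hp : ∀ a, p a = c a / m) :
    (2 : ℝ) ^ (m * ∑ a, p a * logb 2 (p a)) = ∏ a, p a ^ c a := by
  rw [mul_sum, rpow_sum_of_pos two_pos]
  refine prod_congr rfl fun a _ => ?_
  rcases Nat.eq_zero_or_pos (c a) with hc | hc
  · simp [hp a, hc]
  · have hpa : 0 < p a := by rw [hp a]; positivity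
    rw [← mul_assoc, hp a, mul_div_cancel₀ _ (by exact_mod_cast hm), ← hp a, mul_comm,
      rpow_mul zero_le_two, rpow_logb two_pos (by norm_num) hpa, rpow_natCast]

theorem pow_mul_prod_pow_eq_two_rpow {α : Type*} [Fintype α] (p : α → ℝ) (c : α → ℕ) {m : ℕ}
    (hm : m ≠ 0) (hp : ∀ a, p a = c a / m) {K : ℝ} (hK : 0 < K) :
    K ^ m * ∏ a, p a ^ c a = 2 ^ (-(m * (-∑ a, p a * logb 2 (p a) - logb 2 K))) := by
  rw [← two_rpow_mul_sum_mul_logb p c hm hp,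
    show -(m * (-∑ a, p a * logb 2 (p a) - logb 2 K)) =
      logb 2 K * m + m * ∑ a, p a * logb 2 (p a) by ring,
    rpow_add two_pos, rpow_mul_natCast zero_le_two, rpow_logb two_pos (by norm_num) hK]

end Real

theorem hidden_markov_prob_le_empirical_entropy_general {X Z : Type*} [Fintype X] [DecidableEq X]
    [Fintype Z] (s ℓ m : ℕ) (hs : Fintype.card Z = s) (hm : 0 < m)
    (T : Z → X → Z → ℝ) (hT0 : ∀ z a z', 0 ≤ T z a z')
    (hT1 : ∀ z, ∑ a : X, ∑ z' : Z, T z a z' = 1)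
    (z1 : Z) (x : Fin (m * ℓ) → X) :
    let P : ℝ := ∑ zs : Fin (m * ℓ) → Z, ∏ i : Fin (m * ℓ),
      T ((Fin.cons z1 zs : Fin (m * ℓ + 1) → Z) i.castSucc) (x i) ((Fin.cons z1 zs : Fin (m * ℓ + 1) → Z) i.succ)
    let B : Fin m → (Fin ℓ → X) := fun i j => x (finProdFinEquiv (i, j))
    let Phat : (Fin ℓ → X) → ℝ :=
      fun a => ((Finset.univ.filter fun i => B i = a).card : ℝ) / m
    let H : ℝ := -∑ a : Fin ℓ → X, Phat a * Real.logb 2 (Phat a)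
    P ≤ (2 : ℝ) ^ (-((m : ℝ) * (H - Real.logb 2 ((s : ℝ) ^ 3 * Real.exp 1)))) := by
  intro P B Phat H
  classical
  let M : X → Matrix Z Z ℝ := fun a => Matrix.of fun z z' => T z a z'
  have hM_nonneg : ∀ a i j, 0 ≤ M a i j := fun a i j => hT0 i a j
  have hs_pos : 0 < s := hs ▸ Fintype.card_pos_iff.2 ⟨z1⟩
  have hs_le : (s : ℝ) ≤ (s : ℝ) ^ 3 * Real.exp 1 :=
    (show (s : ℝ) ≤ (s : ℝ) ^ 3 by exact_mod_cast Nat.le_self_pow three_ne_zero s).trans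
      (le_mul_of_one_le_right (by positivity) (Real.one_le_exp zero_le_one))
  calc P = ∑ z', (List.ofFn fun i => M (x i)).prod z1 z' :=
        (Matrix.sum_list_prod_ofFn_apply (fun i => M (x i)) z1).symm
    _ ≤ ∏ k, Matrix.wordWeight M (B k) :=
        Matrix.sum_list_prod_ofFn_apply_le_prod_wordWeight hM_nonneg x z1
    _ ≤ (∑ b, Matrix.wordWeight M b) ^ m * ∏ a, Phat a ^ #{k | B k = a} := by
        have := Real.prod_comp_le_sum_pow_card_mul_prod_freq_pow B _
          (Matrix.wordWeight_nonneg hM_nonneg)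
        rwa [Fintype.card_fin] at this
    _ ≤ ((s : ℝ) ^ 3 * Real.exp 1) ^ m * ∏ a, Phat a ^ #{k | B k = a} := by
        rw [Matrix.sum_wordWeight (Matrix.sum_of_mem_rowStochastic T hT0 hT1), hs]
        exact mul_le_mul_of_nonneg_right (pow_le_pow_left₀ s.cast_nonneg hs_le m)
          (prod_nonneg fun a _ => by positivity)
    _ = _ := Real.pow_mul_prod_pow_eq_two_rpow Phat _ hm.ne' (fun a => rfl) (by positivity)

/-- Hidden Markov (non-unifilar finite-state) source bound: let the source have `s`
states with transition probabilities `T z x z' = P(x, z' | z)` and fixed initial state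
`z1`, so `P(x^n) = ∑_{z_2,…,z_{n+1}} ∏_i T(z_i, x_i, z_{i+1})`.  If `n = m·ℓ` and
`Ĥ_ℓ(x^n)` is the empirical entropy (bits) of the non-overlapping `ℓ`-blocks of `x^n`,
then `P(x^n) ≤ 2^{-m[Ĥ_ℓ(x^n) - log₂(s³e)]}`, i.e.
`-log₂ P(x^n) ≥ m[Ĥ_ℓ(x^n) - log₂(s³e)]`. -/
theorem hidden_markov_prob_le_empirical_entropy {X Z : Type*} [Fintype X] [DecidableEq X]
    [Fintype Z] (s ℓ m : ℕ) (hs : Fintype.card Z = s) (hℓ : 0 < ℓ) (hm : 0 < m)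
    (T : Z → X → Z → ℝ) (hT0 : ∀ z a z', 0 ≤ T z a z')
    (hT1 : ∀ z, ∑ a : X, ∑ z' : Z, T z a z' = 1)
    (z1 : Z) (x : Fin (m * ℓ) → X) :
    let P : ℝ := ∑ zs : Fin (m * ℓ) → Z, ∏ i : Fin (m * ℓ),
      T ((Fin.cons z1 zs : Fin (m * ℓ + 1) → Z) i.castSucc) (x i) ((Fin.cons z1 zs : Fin (m * ℓ + 1) → Z) i.succ)
    let B : Fin m → (Fin ℓ → X) := fun i j => x (finProdFinEquiv (i, j))
    let Phat : (Fin ℓ → X) → ℝ :=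
      fun a => ((Finset.univ.filter fun i => B i = a).card : ℝ) / m
    let H : ℝ := -∑ a : Fin ℓ → X, Phat a * Real.logb 2 (Phat a)
    P ≤ (2 : ℝ) ^ (-((m : ℝ) * (H - Real.logb 2 ((s : ℝ) ^ 3 * Real.exp 1)))) :=
  hidden_markov_prob_le_empirical_entropy_general s ℓ m hs hm T hT0 hT1 z1 x
end

section
/- Under the assumptions of the hidden-Markov probability bound and with ρ_{K(ℓ)}(x^n) the K(ℓ)-state finite-state compressibility of x^n, where K(ℓ) = (α^{ℓ+1}-1)/(α-1), one has -log₂ P(x^n) ≥ n·ρ_{K(ℓ)}(x^n) - (n/ℓ)·log₂(2s³e) for every divisor ℓ of n. -/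
/-- A finite-state encoder with state set `Fin K`: an initial state, an output function
mapping (state, symbol) to a binary word, and a next-state function. -/
structure FSEncoder (X : Type*) (K : ℕ) where
  init : Fin K
  out : Fin K → X → List Bool
  nxt : Fin K → X → Fin K

namespace FSEncoder

variable {X : Type*} {K : ℕ}

/-- Run the encoder from state `σ` on input `xs`, returning the final state and the
sequence of output binary words. -/
def runFrom (E : FSEncoder X K) (σ : Fin K) : List X → Fin K × List (List Bool)
  | [] => (σ, [])
  | a :: xs =>
      let r := E.runFrom (E.nxt σ a) xs
      (r.1, E.out σ a :: r.2)

/-- Information losslessness: for every initial state, the pair (final state, sequence of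
output words) of equal-length inputs determines the input. -/
def IL (E : FSEncoder X K) : Prop :=
  ∀ (σ : Fin K) (xs ys : List X), xs.length = ys.length →
    E.runFrom σ xs = E.runFrom σ ys → xs = ys

/-- Total codelength (in bits) of `xs` under encoder `E` started at its initial state. -/
def codeLen (E : FSEncoder X K) (xs : List X) : ℕ :=
  (((E.runFrom E.init xs).2).map List.length).sum

end FSEncoder

/-- The `K`-state finite-state compressibility of a string: the infimum of normalized
codelengths over all information-lossless `K`-state encoders. -/
noncomputable def rhoFS (X : Type*) (K : ℕ) (xs : List X) : ℝ :=
  sInf {r : ℝ | ∃ E : FSEncoder X K, E.IL ∧ r = (E.codeLen xs : ℝ) / xs.length}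

set_option linter.unusedSectionVars false
set_option maxHeartbeats 1000000

namespace HMM

variable {X : Type*} [Fintype X] [DecidableEq X]

noncomputable def sym (a : X) : ℕ := (Fintype.equivFin X a : ℕ)

lemma sym_lt (a : X) : sym a < Fintype.card X := (Fintype.equivFin X a).isLt

noncomputable def idx : List X → ℕ
  | [] => 0
  | a :: u => 1 + sym a + Fintype.card X * idx u

noncomputable def dec : ℕ → List X
  | 0 => []
  | (n+1) =>
      if h : n % Fintype.card X < Fintype.card X then
        (Fintype.equivFin X).symm ⟨_, h⟩ :: dec (n / Fintype.card X)
      else []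
  decreasing_by exact Nat.lt_succ_of_le (Nat.div_le_self _ _)

lemma dec_idx (u : List X) : dec (idx u) = u := by
  induction u with
  | nil => simp [idx, dec]
  | cons a u ih =>
    have hα : 0 < Fintype.card X := Fintype.card_pos_iff.2 ⟨a⟩
    have h1 : idx (a :: u) = (sym a + Fintype.card X * idx u) + 1 := by
      simp [idx]; ring
    rw [h1, dec]
    have hmod : (sym a + Fintype.card X * idx u) % Fintype.card X = sym a := by
      rw [Nat.add_mul_mod_self_left, Nat.mod_eq_of_lt (sym_lt a)]
    have hdiv : (sym a + Fintype.card X * idx u) / Fintype.card X = idx u := by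
      rw [Nat.add_mul_div_left _ _ hα, Nat.div_eq_of_lt (sym_lt a), Nat.zero_add]
    rw [dif_pos (show _ < _ by rw [hmod]; exact sym_lt a)]
    congr 1
    · simp_rw [hmod]
      exact (Equiv.symm_apply_eq _).mpr (Fin.ext rfl)
    · rw [hdiv, ih]

lemma idx_injective : Function.Injective (idx (X := X)) := fun u v h => by
  rw [← dec_idx u, ← dec_idx v, h]

lemma idx_dec (hα : 0 < Fintype.card X) (n : ℕ) : idx (dec (X := X) n) = n := by
  induction n using Nat.strong_induction_on with
  | _ n ih =>
    match n with
    | 0 => simp [idx, dec]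
    | (n+1) =>
      rw [dec, dif_pos (Nat.mod_lt _ hα)]
      have h1 := ih (n / Fintype.card X) (Nat.lt_succ_of_le (Nat.div_le_self _ _))
      simp only [idx, h1, sym, Equiv.apply_symm_apply]
      have h2 := Nat.mod_add_div n (Fintype.card X)
      omega

lemma dec_injective (hα : 0 < Fintype.card X) : Function.Injective (dec (X := X)) :=
  Function.LeftInverse.injective (idx_dec hα)

/-- number of strings of length `< t` over an `α`-ary alphabet -/
def S (α t : ℕ) : ℕ := ∑ j ∈ Finset.range t, α ^ j

lemma S_succ (α t : ℕ) : S α (t+1) = 1 + α * S α t := by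
  rw [S, S, geom_sum_succ]; ring

lemma S_mono (α : ℕ) {t t' : ℕ} (h : t ≤ t') : S α t ≤ S α t' :=
  Finset.sum_le_sum_of_subset (Finset.range_subset_range.2 h)

lemma one_le_S (α t : ℕ) : 1 ≤ S α (t+1) := by
  calc 1 = S α 1 := by simp [S]
  _ ≤ S α (t+1) := S_mono α (by omega)

lemma idx_lt_S {u : List X} {t : ℕ} (h : u.length ≤ t) :
    idx u < S (Fintype.card X) (t + 1) := by
  induction u generalizing t with
  | nil =>
    have : idx ([] : List X) = 0 := rfl
    rw [this]; exact lt_of_lt_of_le Nat.zero_lt_one (one_le_S _ _)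
  | cons a u ih =>
    obtain ⟨t, rfl⟩ : ∃ t', t = t' + 1 := ⟨t - 1, by simp at h; omega⟩
    have h1 : idx u < S (Fintype.card X) (t+1) := ih (by simp at h; omega)
    have h2 := sym_lt a
    have h3 : idx (a :: u) < 1 + Fintype.card X * S (Fintype.card X) (t+1) := by
      simp only [idx]
      have h4 : Fintype.card X * (idx u + 1) ≤ Fintype.card X * S (Fintype.card X) (t+1) :=
        Nat.mul_le_mul_left _ h1
      have h5 : Fintype.card X * (idx u + 1) = Fintype.card X * idx u + Fintype.card X := by
        ring
      omega
    rw [S_succ]; exact h3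

lemma K_eq_S {α : ℕ} (hα : 2 ≤ α) (t : ℕ) : (α ^ t - 1) / (α - 1) = S α t := by
  have key : (α - 1) * S α t = α ^ t - 1 := by
    induction t with
    | zero => simp [S]
    | succ t ih =>
      have h1 : 1 ≤ α ^ t := Nat.one_le_pow _ _ (by omega)
      rw [S, geom_sum_succ', Nat.mul_add, show (∑ i ∈ Finset.range t, α ^ i) = S α t from rfl,
        ih, pow_succ, Nat.sub_mul, Nat.one_mul, Nat.mul_comm α (α ^ t)]
      have h4 : α ^ t ≤ α ^ t * α := Nat.le_mul_of_pos_right _ (by omega)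
      omega
  rw [← key, Nat.mul_div_cancel_left _ (by omega)]

lemma dec_length_le (hα : 0 < Fintype.card X) {n t : ℕ}
    (h : n < S (Fintype.card X) (t + 1)) : (dec (X := X) n).length ≤ t := by
  induction n using Nat.strong_induction_on generalizing t with
  | _ n ih =>
    match n with
    | 0 => simp [dec]
    | (n+1) =>
      obtain ⟨t, rfl⟩ : ∃ t', t = t' + 1 := by
        cases t with
        | zero => rw [show S (Fintype.card X) 1 = 1 from by simp [S]] at h; omega
        | succ t => exact ⟨t, rfl⟩
      rw [dec, dif_pos (Nat.mod_lt _ hα)]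
      simp only [List.length_cons]
      have hdivlt : n / Fintype.card X < S (Fintype.card X) (t + 1) := by
        rw [Nat.div_lt_iff_lt_mul hα]
        have h6 := S_succ (Fintype.card X) (t+1)
        have h7 : Fintype.card X * S (Fintype.card X) (t+1)
            = S (Fintype.card X) (t+1) * Fintype.card X := by ring
        omega
      have := ih (n / Fintype.card X) (Nat.lt_succ_of_le (Nat.div_le_self _ _)) hdivlt
      omega



/-- the `n`-th binary string (length-lexicographic enumeration, `n ≥ 1`) -/
def fcode : ℕ → List Bool
  | 0 => []
  | 1 => []
  | (n+2) => decide ((n+2) % 2 = 1) :: fcode ((n+2)/2)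
  decreasing_by exact Nat.div_lt_self (by omega) (by omega)

set_option linter.unusedSectionVars false

lemma fcode_inj : ∀ {m n : ℕ}, 1 ≤ m → 1 ≤ n → fcode m = fcode n → m = n := by
  intro m
  induction m using Nat.strong_induction_on with
  | _ m ih =>
    intro n hm hn h
    match m, n with
    | 1, 1 => rfl
    | 1, (n+2) => rw [fcode, fcode] at h; exact absurd h (by simp)
    | (m+2), 1 => rw [fcode, fcode] at h; exact absurd h (by simp)
    | (m+2), (n+2) =>
      rw [fcode, fcode] at h
      obtain ⟨h1, h2⟩ := List.cons.injEq _ _ _ _ ▸ h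
      have h3 : (m+2) % 2 = (n+2) % 2 := by
        rcases Nat.mod_two_eq_zero_or_one (m+2) with hh | hh <;>
          rcases Nat.mod_two_eq_zero_or_one (n+2) with hh' | hh' <;>
          simp [hh, hh'] at h1 ⊢
      have h4 : (m+2)/2 = (n+2)/2 :=
        ih ((m+2)/2) (Nat.div_lt_self (by omega) (by omega)) (by omega) (by omega) h2
      omega

lemma fcode_len {n : ℕ} (hn : 1 ≤ n) : 2 ^ (fcode n).length ≤ n := by
  induction n using Nat.strong_induction_on with
  | _ n ih =>
    match n with
    | 1 => simp [fcode]
    | (n+2) =>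
      rw [fcode]
      have := ih ((n+2)/2) (Nat.div_lt_self (by omega) (by omega)) (by omega)
      simp only [List.length_cons, pow_succ]
      omega

section Rank

variable {W : Type*} [Fintype W] [DecidableEq W]

/-- rank of `w` in decreasing order of `g`, ties broken by a fixed enumeration -/
noncomputable def rank (g : W → ℝ) (w : W) : ℕ :=
  (Finset.univ.filter (fun w' => g w < g w' ∨ (g w' = g w ∧
      (Fintype.equivFin W w' : ℕ) ≤ (Fintype.equivFin W w : ℕ)))).card

lemma one_le_rank (g : W → ℝ) (w : W) : 1 ≤ rank g w := by
  rw [rank]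
  refine Finset.card_pos.2 ⟨w, ?_⟩
  rw [Finset.mem_filter]
  exact ⟨Finset.mem_univ _, Or.inr ⟨rfl, le_refl _⟩⟩

lemma rank_mul_le_sum (g : W → ℝ) (hg : ∀ w', 0 ≤ g w') (w : W) :
    (rank g w : ℝ) * g w ≤ ∑ w', g w' := by
  classical
  rw [rank]
  set A := (Finset.univ.filter (fun w' => g w < g w' ∨ (g w' = g w ∧
      (Fintype.equivFin W w' : ℕ) ≤ (Fintype.equivFin W w : ℕ)))) with hA
  calc (A.card : ℝ) * g w = ∑ _w' ∈ A, g w := by rw [Finset.sum_const, nsmul_eq_mul]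
    _ ≤ ∑ w' ∈ A, g w' := by
        refine Finset.sum_le_sum fun w' hw' => ?_
        rw [hA, Finset.mem_filter] at hw'
        rcases hw'.2 with h | h
        · exact le_of_lt h
        · exact le_of_eq h.1.symm
    _ ≤ ∑ w', g w' :=
        Finset.sum_le_sum_of_subset_of_nonneg (Finset.subset_univ _)
          (fun w' _ _ => hg w')

lemma rank_lt_rank (g : W → ℝ) {w w' : W}
    (h : g w < g w' ∨ (g w' = g w ∧ (Fintype.equivFin W w' : ℕ) < (Fintype.equivFin W w : ℕ))) :
    rank g w' < rank g w := by
  classical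
  apply Finset.card_lt_card
  rw [Finset.ssubset_iff_of_subset]
  · refine ⟨w, ?_, ?_⟩
    · rw [Finset.mem_filter]
      refine ⟨Finset.mem_univ _, Or.inr ⟨rfl, le_refl _⟩⟩
    · rw [Finset.mem_filter]
      rintro ⟨-, hc | hc⟩
      · rcases h with h | h
        · exact absurd (lt_trans h hc) (lt_irrefl _)
        · rw [h.1] at hc; exact absurd hc (lt_irrefl _)
      · rcases h with h | h
        · rw [hc.1] at h; exact absurd h (lt_irrefl _)
        · omega
  · intro u hu
    rw [Finset.mem_filter] at hu ⊢
    refine ⟨Finset.mem_univ _, ?_⟩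
    rcases hu.2 with hc | hc
    · rcases h with h | h
      · exact Or.inl (lt_trans h hc)
      · exact Or.inl (h.1 ▸ hc)
    · rcases h with h | h
      · exact Or.inl (lt_of_lt_of_le h (le_of_eq hc.1.symm))
      · exact Or.inr ⟨hc.1.trans h.1, by omega⟩
  
lemma rank_inj (g : W → ℝ) : Function.Injective (rank g) := by
  intro w w' h
  by_contra hne
  have hiW : (Fintype.equivFin W w : ℕ) ≠ (Fintype.equivFin W w' : ℕ) := by
    intro hc
    exact hne ((Fintype.equivFin W).injective (Fin.ext hc))
  rcases lt_trichotomy (g w) (g w') with hg | hg | hg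
  · have := rank_lt_rank g (Or.inl hg); omega
  · rcases Nat.lt_or_ge (Fintype.equivFin W w : ℕ) (Fintype.equivFin W w' : ℕ) with hi | hi
    · have := rank_lt_rank g (w := w') (w' := w) (Or.inr ⟨hg, hi⟩); omega
    · have := rank_lt_rank g (Or.inr ⟨hg.symm, by omega⟩); omega
  · have := rank_lt_rank g (w := w') (w' := w) (Or.inl hg); omega

end Rank


section Prob
variable {X : Type*} [Fintype X] {Z : Type*} [Fintype Z] [DecidableEq Z]

/-- probability that the source started in `z` emits the word `w` -/
noncomputable def pr (T : Z → X → Z → ℝ) : Z → List X → ℝ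
  | _, [] => 1
  | z, a :: w => ∑ z', T z a z' * pr T z' w

/-- probability that the source started in `z` emits `w` and ends in `z'` -/
noncomputable def pp (T : Z → X → Z → ℝ) : Z → List X → Z → ℝ
  | z, [], z' => if z = z' then 1 else 0
  | z, a :: w, z' => ∑ y, T z a y * pp T y w z'

variable {T : Z → X → Z → ℝ}

lemma pr_nonneg (hT0 : ∀ z a z', 0 ≤ T z a z') (z : Z) (w : List X) : 0 ≤ pr T z w := by
  induction w generalizing z with
  | nil => rw [pr]; norm_num
  | cons a w ih =>
    rw [pr]
    exact Finset.sum_nonneg fun z' _ => mul_nonneg (hT0 _ _ _) (ih z')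

lemma pp_nonneg (hT0 : ∀ z a z', 0 ≤ T z a z') (z : Z) (w : List X) (z' : Z) :
    0 ≤ pp T z w z' := by
  induction w generalizing z with
  | nil => rw [pp]; split <;> norm_num
  | cons a w ih =>
    rw [pp]
    exact Finset.sum_nonneg fun y _ => mul_nonneg (hT0 _ _ _) (ih y)

lemma sum_pp (z : Z) (w : List X) : ∑ z', pp T z w z' = pr T z w := by
  classical
  induction w generalizing z with
  | nil => simp [pp, pr]
  | cons a w ih =>
    calc ∑ z', pp T z (a :: w) z' = ∑ z', ∑ y, T z a y * pp T y w z' :=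
          Finset.sum_congr rfl fun z' _ => by rw [pp]
      _ = ∑ y, ∑ z', T z a y * pp T y w z' := Finset.sum_comm
      _ = ∑ y, T z a y * pr T y w :=
          Finset.sum_congr rfl fun y _ => by rw [← Finset.mul_sum, ih]
      _ = pr T z (a :: w) := by rw [pr]

lemma pr_append (z : Z) (w v : List X) :
    pr T z (w ++ v) = ∑ z', pp T z w z' * pr T z' v := by
  classical
  induction w generalizing z with
  | nil => simp [pp]
  | cons a w ih =>
    rw [List.cons_append, pr]
    calc ∑ y, T z a y * pr T y (w ++ v)
        = ∑ y, ∑ z', T z a y * (pp T y w z' * pr T z' v) :=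
          Finset.sum_congr rfl fun y _ => by rw [ih y, Finset.mul_sum]
      _ = ∑ z', ∑ y, T z a y * (pp T y w z' * pr T z' v) := Finset.sum_comm
      _ = ∑ z', pp T z (a :: w) z' * pr T z' v := by
          refine Finset.sum_congr rfl fun z' _ => ?_
          rw [pp, Finset.sum_mul]
          exact Finset.sum_congr rfl fun y _ => by ring

/-- total probability of emitting `w`, summed over initial states -/
noncomputable def Bf (T : Z → X → Z → ℝ) (w : List X) : ℝ := ∑ z, pr T z w

lemma Bf_nonneg (hT0 : ∀ z a z', 0 ≤ T z a z') (w : List X) : 0 ≤ Bf T w :=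
  Finset.sum_nonneg fun z _ => pr_nonneg hT0 z w

lemma pr_le_Bf (hT0 : ∀ z a z', 0 ≤ T z a z') (z : Z) (w : List X) : pr T z w ≤ Bf T w :=
  Finset.single_le_sum (fun z' _ => pr_nonneg hT0 z' w) (Finset.mem_univ z)

lemma prod_Bf_nonneg (hT0 : ∀ z a z', 0 ≤ T z a z') (ws : List (List X)) :
    0 ≤ (ws.map (Bf T)).prod := by
  induction ws with
  | nil => simp
  | cons w ws ih =>
    rw [List.map_cons, List.prod_cons]
    exact mul_nonneg (Bf_nonneg hT0 w) ih

lemma pr_join_le (hT0 : ∀ z a z', 0 ≤ T z a z') (ws : List (List X)) (z : Z) :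
    pr T z ws.flatten ≤ (ws.map (Bf T)).prod := by
  induction ws generalizing z with
  | nil => simp [pr]
  | cons w ws ih =>
    rw [List.flatten_cons, List.map_cons, List.prod_cons, pr_append]
    calc ∑ z', pp T z w z' * pr T z' ws.flatten
        ≤ ∑ z', pp T z w z' * (ws.map (Bf T)).prod := by
          refine Finset.sum_le_sum fun z' _ => ?_
          exact mul_le_mul_of_nonneg_left (ih z') (pp_nonneg hT0 _ _ _)
      _ = pr T z w * (ws.map (Bf T)).prod := by rw [← Finset.sum_mul, sum_pp]
      _ ≤ Bf T w * (ws.map (Bf T)).prod :=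
          mul_le_mul_of_nonneg_right (pr_le_Bf hT0 z w) (prod_Bf_nonneg hT0 ws)

lemma sum_pr_ofFn (hT0 : ∀ z a z', 0 ≤ T z a z') (hT1 : ∀ z, ∑ a : X, ∑ z' : Z, T z a z' = 1)
    (t : ℕ) (z : Z) : ∑ v : Fin t → X, pr T z (List.ofFn v) = 1 := by
  induction t generalizing z with
  | zero => simp [pr]
  | succ t ih =>
    rw [← Equiv.sum_comp (Fin.consEquiv (fun _ : Fin (t+1) => X)), Fintype.sum_prod_type]
    have key : ∀ (a : X) (v : Fin t → X),
        pr T z (List.ofFn ((Fin.consEquiv (fun _ : Fin (t+1) => X)) (a, v)))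
          = ∑ z', T z a z' * pr T z' (List.ofFn v) := by
      intro a v
      have h1 : List.ofFn ((Fin.consEquiv (fun _ : Fin (t+1) => X)) (a, v))
          = a :: List.ofFn v := by
        rw [List.ofFn_succ]
        simp [Fin.consEquiv]
      rw [h1, pr]
    calc ∑ a : X, ∑ v : Fin t → X,
          pr T z (List.ofFn ((Fin.consEquiv (fun _ : Fin (t+1) => X)) (a, v)))
        = ∑ a : X, ∑ v : Fin t → X, ∑ z', T z a z' * pr T z' (List.ofFn v) :=
          Finset.sum_congr rfl fun a _ => Finset.sum_congr rfl fun v _ => key a v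
      _ = ∑ a : X, ∑ z', ∑ v : Fin t → X, T z a z' * pr T z' (List.ofFn v) :=
          Finset.sum_congr rfl fun a _ => Finset.sum_comm
      _ = ∑ a : X, ∑ z', T z a z' := by
          refine Finset.sum_congr rfl fun a _ => Finset.sum_congr rfl fun z' _ => ?_
          rw [← Finset.mul_sum, ih z', mul_one]
      _ = 1 := hT1 z

/-- the full-string HMM probability equals `pr` -/
lemma hmm_eq_pr (t : ℕ) (z : Z) (x : Fin t → X) :
    (∑ zs : Fin t → Z, ∏ i : Fin t,
      T ((Fin.cons z zs : Fin (t + 1) → Z) i.castSucc) (x i)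
        ((Fin.cons z zs : Fin (t + 1) → Z) i.succ)) = pr T z (List.ofFn x) := by
  induction t generalizing z with
  | zero => simp [pr]
  | succ t ih =>
    rw [← Equiv.sum_comp (Fin.consEquiv (fun _ : Fin (t+1) => Z)), Fintype.sum_prod_type]
    have key : ∀ (z' : Z) (zs : Fin t → Z),
        (∏ i : Fin (t+1),
          T ((Fin.cons z ((Fin.consEquiv (fun _ : Fin (t+1) => Z)) (z', zs)) :
                Fin (t + 2) → Z) i.castSucc) (x i)
            ((Fin.cons z ((Fin.consEquiv (fun _ : Fin (t+1) => Z)) (z', zs)) :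
                Fin (t + 2) → Z) i.succ))
        = T z (x 0) z' * ∏ i : Fin t,
            T ((Fin.cons z' zs : Fin (t + 1) → Z) i.castSucc) (x i.succ)
              ((Fin.cons z' zs : Fin (t + 1) → Z) i.succ) := by
      intro z' zs
      have hzs : ((Fin.consEquiv (fun _ : Fin (t+1) => Z)) (z', zs)) = Fin.cons z' zs := rfl
      rw [hzs, Fin.prod_univ_succ]
      have h0 : T ((Fin.cons z (Fin.cons z' zs) : Fin (t+2) → Z) ((0 : Fin (t+1)).castSucc)) (x 0)
          ((Fin.cons z (Fin.cons z' zs) : Fin (t+2) → Z) ((0 : Fin (t+1)).succ)) = T z (x 0) z' := by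
        simp
      rw [h0]
      refine congrArg _ (Finset.prod_congr rfl fun i _ => ?_)
      have e1 : (Fin.cons z (Fin.cons z' zs) : Fin (t+2) → Z) (i.succ.castSucc)
          = (Fin.cons z' zs : Fin (t+1) → Z) i.castSucc := by
        rw [← Fin.succ_castSucc, Fin.cons_succ]
      have e2 : (Fin.cons z (Fin.cons z' zs) : Fin (t+2) → Z) (i.succ.succ)
          = (Fin.cons z' zs : Fin (t+1) → Z) i.succ := by
        rw [Fin.cons_succ]
      rw [e1, e2]
    calc ∑ z' : Z, ∑ zs : Fin t → Z, (∏ i : Fin (t+1),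
          T ((Fin.cons z ((Fin.consEquiv (fun _ : Fin (t+1) => Z)) (z', zs)) :
                Fin (t + 2) → Z) i.castSucc) (x i)
            ((Fin.cons z ((Fin.consEquiv (fun _ : Fin (t+1) => Z)) (z', zs)) :
                Fin (t + 2) → Z) i.succ))
        = ∑ z' : Z, T z (x 0) z' * ∑ zs : Fin t → Z, ∏ i : Fin t,
            T ((Fin.cons z' zs : Fin (t + 1) → Z) i.castSucc) (x i.succ)
              ((Fin.cons z' zs : Fin (t + 1) → Z) i.succ) := by
          refine Finset.sum_congr rfl fun z' _ => ?_
          rw [Finset.mul_sum]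
          exact Finset.sum_congr rfl fun zs _ => key z' zs
      _ = ∑ z' : Z, T z (x 0) z' * pr T z' (List.ofFn fun i => x i.succ) :=
          Finset.sum_congr rfl fun z' _ => by rw [ih]
      _ = pr T z (List.ofFn x) := by rw [List.ofFn_succ, pr]


end Prob

section Encoder
variable {X : Type*} [Fintype X] [DecidableEq X]

lemma ofFn_get_cast {l : List X} {t : ℕ} (h : l.length = t) :
    List.ofFn (fun i : Fin t => l.get (Fin.cast h.symm i)) = l := by
  subst h
  exact List.ofFn_get l

/-- the block code: ranked code on blocks of length `ℓ`, injective fallback elsewhere -/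
noncomputable def enc {ℓ : ℕ} (g : (Fin ℓ → X) → ℝ) (lst : List X) : List Bool :=
  if h : lst.length = ℓ then fcode (rank g (fun i => lst.get (Fin.cast h.symm i)))
  else List.replicate (idx lst) true

lemma enc_inj {ℓ : ℕ} (g : (Fin ℓ → X) → ℝ) {l1 l2 : List X}
    (hlen : l1.length = l2.length) (h : enc g l1 = enc g l2) : l1 = l2 := by
  rw [enc, enc] at h
  by_cases h1 : l1.length = ℓ
  · have h2 : l2.length = ℓ := hlen ▸ h1
    rw [dif_pos h1, dif_pos h2] at h
    have h3 := fcode_inj (one_le_rank g _) (one_le_rank g _) h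
    have h4 := rank_inj g h3
    have h5 : List.ofFn (fun i => l1.get (Fin.cast h1.symm i))
        = List.ofFn (fun i => l2.get (Fin.cast h2.symm i)) := by rw [h4]
    rwa [ofFn_get_cast h1, ofFn_get_cast h2] at h5
  · have h2 : ¬ l2.length = ℓ := fun hc => h1 (hlen ▸ hc)
    rw [dif_neg h1, dif_neg h2] at h
    have h3 : idx l1 = idx l2 := by
      have := congrArg List.length h
      simpa using this
    exact idx_injective h3

/-- state of the block encoder corresponding to partial (reversed) block `u` -/
noncomputable def stF (K : ℕ) (hK : 0 < K) (u : List X) : Fin K :=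
  ⟨idx u % K, Nat.mod_lt _ hK⟩

/-- the block encoder: buffers `ℓ` symbols, then emits the ranked code of the block -/
noncomputable def Enc (ℓ K : ℕ) (hK : 0 < K) (g : (Fin ℓ → X) → ℝ) : FSEncoder X K where
  init := ⟨0, hK⟩
  out σ a := if (dec (X := X) σ.val).length + 1 < ℓ then []
             else enc g (a :: dec (X := X) σ.val)
  nxt σ a := if (dec (X := X) σ.val).length + 1 < ℓ then
               ⟨idx (a :: dec (X := X) σ.val) % K, Nat.mod_lt _ hK⟩
             else ⟨0, hK⟩

lemma Enc_out (ℓ K : ℕ) (hK : 0 < K) (g : (Fin ℓ → X) → ℝ) (σ : Fin K) (a : X) :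
    (Enc ℓ K hK g).out σ a = if (dec (X := X) σ.val).length + 1 < ℓ then []
      else enc g (a :: dec (X := X) σ.val) := rfl

lemma Enc_nxt (ℓ K : ℕ) (hK : 0 < K) (g : (Fin ℓ → X) → ℝ) (σ : Fin K) (a : X) :
    (Enc ℓ K hK g).nxt σ a = if (dec (X := X) σ.val).length + 1 < ℓ then
        ⟨idx (a :: dec (X := X) σ.val) % K, Nat.mod_lt _ hK⟩
      else ⟨0, hK⟩ := rfl

lemma Enc_run_inj (hα : 2 ≤ Fintype.card X) {ℓ K : ℕ} (hK : 0 < K)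
    (hKS : S (Fintype.card X) ℓ ≤ K) (g : (Fin ℓ → X) → ℝ) :
    ∀ (xs ys : List X) (σ τ : Fin K), xs.length = ys.length →
      (dec (X := X) σ.val).length = (dec (X := X) τ.val).length →
      (Enc ℓ K hK g).runFrom σ xs = (Enc ℓ K hK g).runFrom τ ys →
      σ = τ ∧ xs = ys := by
  have hα0 : 0 < Fintype.card X := by omega
  intro xs
  induction xs with
  | nil =>
    intro ys σ τ hlen hst hrun
    match ys with
    | [] =>
      rw [FSEncoder.runFrom, FSEncoder.runFrom] at hrun
      exact ⟨congrArg Prod.fst hrun, rfl⟩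
  | cons a xs ih =>
    intro ys σ τ hlen hst hrun
    match ys with
    | b :: ys =>
      simp only [FSEncoder.runFrom, Prod.mk.injEq, List.cons.injEq] at hrun
      obtain ⟨hfst, hout, htl⟩ := hrun
      have h2 : (Enc ℓ K hK g).runFrom ((Enc ℓ K hK g).nxt σ a) xs
          = (Enc ℓ K hK g).runFrom ((Enc ℓ K hK g).nxt τ b) ys := Prod.ext hfst htl
      have hlen' : xs.length = ys.length := by simpa using hlen
      set u := dec (X := X) σ.val with hu
      set v := dec (X := X) τ.val with hv
      by_cases hcase : u.length + 1 < ℓ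
      · have hcase' : v.length + 1 < ℓ := hst ▸ hcase
        have hidxa : idx (a :: u) < K := by
          have h3 : (a :: u).length ≤ ℓ - 1 := by simp; omega
          have h4 := idx_lt_S (u := a :: u) (t := ℓ - 1) h3
          have h5 : ℓ - 1 + 1 = ℓ := by omega
          rw [h5] at h4
          omega
        have hidxb : idx (b :: v) < K := by
          have h3 : (b :: v).length ≤ ℓ - 1 := by simp; omega
          have h4 := idx_lt_S (u := b :: v) (t := ℓ - 1) h3
          have h5 : ℓ - 1 + 1 = ℓ := by omega
          rw [h5] at h4
          omega
        rw [Enc_nxt, Enc_nxt, ← hu, ← hv, if_pos hcase, if_pos hcase'] at h2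
        have hdeca : dec (X := X) (idx (a :: u) % K) = a :: u := by
          rw [Nat.mod_eq_of_lt hidxa, dec_idx]
        have hdecb : dec (X := X) (idx (b :: v) % K) = b :: v := by
          rw [Nat.mod_eq_of_lt hidxb, dec_idx]
        have hst' : (dec (X := X) (idx (a :: u) % K)).length
            = (dec (X := X) (idx (b :: v) % K)).length := by
          rw [hdeca, hdecb]; simp [hst]
        obtain ⟨hσ', hxs⟩ := ih ys _ _ hlen' hst' h2
        have hvals : idx (a :: u) = idx (b :: v) := by
          have := congrArg Fin.val hσ'
          simpa [Nat.mod_eq_of_lt hidxa, Nat.mod_eq_of_lt hidxb] using this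
        have hcons : a :: u = b :: v := idx_injective hvals
        have hab : a = b := by injection hcons
        have huv : u = v := by injection hcons
        refine ⟨?_, by rw [hab, hxs]⟩
        apply Fin.ext
        calc σ.val = idx u := by rw [hu, idx_dec hα0]
          _ = idx v := by rw [huv]
          _ = τ.val := by rw [hv, idx_dec hα0]
      · have hcase' : ¬ (v.length + 1 < ℓ) := hst ▸ hcase
        rw [Enc_out, Enc_out, ← hu, ← hv, if_neg hcase, if_neg hcase'] at hout
        have hcons : a :: u = b :: v :=
          enc_inj g (by simp [hst]) hout
        have hab : a = b := by injection hcons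
        have huv : u = v := by injection hcons
        rw [Enc_nxt, Enc_nxt, ← hu, ← hv, if_neg hcase, if_neg hcase'] at h2
        obtain ⟨-, hxs⟩ := ih ys _ _ hlen' rfl h2
        refine ⟨?_, by rw [hab, hxs]⟩
        apply Fin.ext
        calc σ.val = idx u := by rw [hu, idx_dec hα0]
          _ = idx v := by rw [huv]
          _ = τ.val := by rw [hv, idx_dec hα0]

lemma Enc_IL (hα : 2 ≤ Fintype.card X) {ℓ K : ℕ} (hK : 0 < K)
    (hKS : S (Fintype.card X) ℓ ≤ K) (g : (Fin ℓ → X) → ℝ) :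
    (Enc ℓ K hK g).IL := fun σ xs ys hlen hrun =>
  (Enc_run_inj hα hK hKS g xs ys σ σ hlen rfl hrun).2

lemma Enc_run_block (hα : 2 ≤ Fintype.card X) {ℓ K : ℕ} (hK : 0 < K)
    (hKS : S (Fintype.card X) ℓ ≤ K) (g : (Fin ℓ → X) → ℝ) :
    ∀ (w u rest : List X), w ≠ [] → u.length + w.length = ℓ →
      ((((Enc ℓ K hK g).runFrom (stF K hK u) (w ++ rest)).2.map List.length).sum
        = (enc g (w.reverse ++ u)).length
          + ((((Enc ℓ K hK g).runFrom (stF K hK ([] : List X)) rest)).2.map List.length).sum) := by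
  have hα0 : 0 < Fintype.card X := by omega
  intro w
  induction w with
  | nil => intro u rest hne _; exact absurd rfl hne
  | cons a w ih =>
    intro u rest _ hlen
    have hu_lt : idx u < K := by
      have h3 : u.length ≤ ℓ - 1 := by simp at hlen; omega
      have h4 := idx_lt_S (u := u) (t := ℓ - 1) h3
      have h5 : ℓ - 1 + 1 = ℓ := by simp at hlen; omega
      rw [h5] at h4
      omega
    have hdecu : dec (X := X) ((stF K hK u).val) = u := by
      show dec (X := X) (idx u % K) = u
      rw [Nat.mod_eq_of_lt hu_lt, dec_idx]
    rcases List.eq_nil_or_concat' w with hw | ⟨w', c, hw⟩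
    · -- w = [a] : completes the block
      subst hw
      have hfull : u.length + 1 = ℓ := by simpa using hlen
      rw [List.singleton_append, FSEncoder.runFrom]
      rw [Enc_out, Enc_nxt, hdecu, if_neg (by omega), if_neg (by omega)]
      have hst0 : (⟨0, hK⟩ : Fin K) = stF K hK ([] : List X) := by
        apply Fin.ext
        simp [stF, idx]
      rw [hst0]
      simp [List.reverse_cons]
    · -- w nonempty : buffer the symbol
      have hwne : w ≠ [] := by subst hw; simp
      have hwlen : 0 < w.length := List.length_pos_iff.2 hwne
      have hlt : u.length + 1 < ℓ := by simp at hlen; omega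
      rw [List.cons_append, FSEncoder.runFrom]
      rw [Enc_out, Enc_nxt, hdecu, if_pos hlt, if_pos hlt]
      have hnxt : (⟨idx (a :: u) % K, Nat.mod_lt _ hK⟩ : Fin K) = stF K hK (a :: u) := rfl
      rw [hnxt]
      have := ih (a :: u) rest hwne (by simp at hlen ⊢; omega)
      simp only [List.map_cons, List.sum_cons, List.length_nil, Nat.zero_add]
      rw [this]
      congr 2
      rw [List.reverse_cons, List.append_assoc, List.singleton_append]

lemma Enc_codeLen (hα : 2 ≤ Fintype.card X) {ℓ K : ℕ} (hℓ : 0 < ℓ) (hK : 0 < K)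
    (hKS : S (Fintype.card X) ℓ ≤ K) (g : (Fin ℓ → X) → ℝ)
    (ws : List (List X)) (hws : ∀ w ∈ ws, w.length = ℓ) :
    (Enc ℓ K hK g).codeLen ws.flatten
      = (ws.map (fun w => (enc g w.reverse).length)).sum := by
  have hinit : (Enc ℓ K hK g).init = stF K hK ([] : List X) := by
    apply Fin.ext
    simp [Enc, stF, idx]
  rw [FSEncoder.codeLen, hinit]
  induction ws with
  | nil => simp only [List.flatten_nil]; rw [FSEncoder.runFrom]; simp
  | cons w ws ih =>
    have hwlen : w.length = ℓ := hws w (by simp)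
    rw [List.flatten_cons,
      Enc_run_block hα hK hKS g w [] ws.flatten
        (by intro hc; rw [hc] at hwlen; simp at hwlen; omega) (by simpa using hwlen)]
    rw [List.map_cons, List.sum_cons, List.append_nil]
    congr 1
    exact ih (fun w' hw' => hws w' (by simp [hw']))

/-- decomposition of a string of length `m*ℓ` into `m` blocks of length `ℓ` -/
lemma exists_chunks (ℓ : ℕ) : ∀ (m : ℕ) (xs : List X), xs.length = m * ℓ →
    ∃ ws : List (List X), ws.length = m ∧ (∀ w ∈ ws, w.length = ℓ) ∧ ws.flatten = xs := by
  intro m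
  induction m with
  | zero =>
    intro xs hxs
    simp at hxs
    exact ⟨[], rfl, by simp, by simp [hxs]⟩
  | succ m ih =>
    intro xs hxs
    have hlen : ℓ ≤ xs.length := by rw [hxs]; nlinarith [Nat.succ_mul m ℓ]
    obtain ⟨ws, hws1, hws2, hws3⟩ := ih (xs.drop ℓ) (by simp [hxs, Nat.succ_mul])
    refine ⟨xs.take ℓ :: ws, by simp [hws1], ?_, ?_⟩
    · intro w hw
      rcases List.mem_cons.1 hw with hw | hw
      · rw [hw, List.length_take]; omega
      · exact hws2 w hw
    · rw [List.flatten_cons, hws3, List.take_append_drop]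

end Encoder


section Final
variable {X : Type*} [Fintype X] [DecidableEq X]

lemma ofFn_comp_rev {ℓ : ℕ} (v : Fin ℓ → X) :
    List.ofFn (fun i => v i.rev) = (List.ofFn v).reverse := by
  apply List.ext_getElem (by simp)
  intro i h1 h2
  rw [List.getElem_reverse, List.getElem_ofFn, List.getElem_ofFn]
  congr 1
  apply Fin.ext
  rw [Fin.val_rev]
  simp only [List.length_ofFn] at h2 ⊢
  omega

lemma sum_ofFn_reverse {ℓ : ℕ} (F : List X → ℝ) :
    ∑ v : Fin ℓ → X, F ((List.ofFn v).reverse) = ∑ v : Fin ℓ → X, F (List.ofFn v) := by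
  classical
  have hinv : Function.Involutive (fun v : Fin ℓ → X => fun i => v i.rev) := fun v => by
    funext i; simp
  rw [← Equiv.sum_comp (Function.Involutive.toPerm _ hinv) (fun u => F (List.ofFn u))]
  refine Finset.sum_congr rfl fun v _ => ?_
  congr 1
  rw [← ofFn_comp_rev]
  rfl

lemma prod_pow_le {c : ℝ} (hc : 0 ≤ c) (B : List X → ℝ) (L : List X → ℕ)
    (hB : ∀ w, 0 ≤ B w) :
    ∀ ws : List (List X), (∀ w ∈ ws, B w * 2 ^ (L w) ≤ c) →
      (ws.map B).prod * 2 ^ ((ws.map L).sum) ≤ c ^ ws.length := by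
  intro ws
  induction ws with
  | nil => simp
  | cons w ws ih =>
    intro h
    rw [List.map_cons, List.prod_cons, List.map_cons, List.sum_cons, List.length_cons,
      pow_add, pow_succ]
    have h1 : (0:ℝ) ≤ (ws.map B).prod :=
      List.prod_nonneg (fun r hr => by
        obtain ⟨w', -, rfl⟩ := List.mem_map.1 hr
        exact hB w')
    calc (B w * (ws.map B).prod) * (2 ^ (L w) * 2 ^ ((ws.map L).sum))
        = (B w * 2 ^ (L w)) * ((ws.map B).prod * 2 ^ ((ws.map L).sum)) := by ring
      _ ≤ c * c ^ ws.length :=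
          mul_le_mul (h w (by simp)) (ih (fun w' hw' => h w' (by simp [hw'])))
            (mul_nonneg h1 (by positivity)) hc
      _ = c ^ ws.length * c := mul_comm _ _

lemma enc_len_bound {ℓ : ℕ} (g : (Fin ℓ → X) → ℝ) (hgn : ∀ v, 0 ≤ g v)
    {lst : List X} (hwl : lst.length = ℓ) :
    g (fun i => lst.get (Fin.cast hwl.symm i)) * 2 ^ (enc g lst).length ≤ ∑ v, g v := by
  rw [enc, dif_pos hwl]
  set F : Fin ℓ → X := fun i => lst.get (Fin.cast hwl.symm i) with hF
  have h2r : (2:ℝ) ^ (fcode (rank g F)).length ≤ (rank g F : ℝ) := by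
    exact_mod_cast fcode_len (one_le_rank g F)
  have h3 := rank_mul_le_sum g hgn F
  calc g F * 2 ^ (fcode (rank g F)).length
      ≤ g F * (rank g F : ℝ) := mul_le_mul_of_nonneg_left h2r (hgn F)
    _ = (rank g F : ℝ) * g F := mul_comm _ _
    _ ≤ ∑ v, g v := h3

end Final
end HMM

/-- Converse bound for finite-state guessing: if `P` is the output distribution of an
`s`-state hidden Markov source (any `s`-state FSGM driven by fair bits), `ℓ` divides
`n = m·ℓ`, and `K(ℓ) = (α^{ℓ+1}-1)/(α-1)`, then
`-log₂ P(x^n) ≥ n·ρ_{K(ℓ)}(x^n) - (n/ℓ)·log₂(2s³e)`, stated in exponential form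
`P(x^n) ≤ 2^{-(n·ρ_{K(ℓ)}(x^n) - m·log₂(2s³e))}`. -/
theorem hidden_markov_prob_le_fs_compressibility {X Z : Type*} [Fintype X] [DecidableEq X]
    [Fintype Z] (s ℓ m : ℕ) (hs : Fintype.card Z = s) (hℓ : 0 < ℓ) (hm : 0 < m)
    (hα : 2 ≤ Fintype.card X)
    (T : Z → X → Z → ℝ) (hT0 : ∀ z a z', 0 ≤ T z a z')
    (hT1 : ∀ z, ∑ a : X, ∑ z' : Z, T z a z' = 1)
    (z1 : Z) (x : Fin (m * ℓ) → X) :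
    let P : ℝ := ∑ zs : Fin (m * ℓ) → Z, ∏ i : Fin (m * ℓ),
      T ((Fin.cons z1 zs : Fin (m * ℓ + 1) → Z) i.castSucc) (x i) ((Fin.cons z1 zs : Fin (m * ℓ + 1) → Z) i.succ)
    let Kℓ : ℕ := (Fintype.card X ^ (ℓ + 1) - 1) / (Fintype.card X - 1)
    P ≤ (2 : ℝ) ^ (-(((m * ℓ : ℕ) : ℝ) * rhoFS X Kℓ (List.ofFn x) -
          (m : ℝ) * Real.logb 2 (2 * (s : ℝ) ^ 3 * Real.exp 1))) := by
  classical
  intro P Kℓ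
  have hα0 : 0 < Fintype.card X := by omega
  have hs1 : 1 ≤ s := by
    have : 0 < Fintype.card Z := Fintype.card_pos_iff.mpr ⟨z1⟩
    omega
  have hK : Kℓ = HMM.S (Fintype.card X) (ℓ+1) := HMM.K_eq_S hα (ℓ+1)
  have hK0 : 0 < Kℓ := by
    rw [hK]
    have := HMM.one_le_S (Fintype.card X) ℓ
    omega
  have hKS : HMM.S (Fintype.card X) ℓ ≤ Kℓ := by
    rw [hK]; exact HMM.S_mono _ (by omega)
  set g : (Fin ℓ → X) → ℝ := fun v => HMM.Bf T ((List.ofFn v).reverse) with hg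
  have hgn : ∀ v : Fin ℓ → X, 0 ≤ g v := fun v => by
    rw [hg]; exact HMM.Bf_nonneg hT0 _
  set E := HMM.Enc ℓ Kℓ hK0 g with hE
  obtain ⟨ws, hws1, hws2, hws3⟩ := HMM.exists_chunks ℓ m (List.ofFn x) (by simp)
  have hcode : E.codeLen (List.ofFn x)
      = (ws.map (fun w => (HMM.enc g w.reverse).length)).sum := by
    rw [← hws3]; exact HMM.Enc_codeLen hα hℓ hK0 hKS g ws hws2
  set Lsum := (ws.map (fun w => (HMM.enc g w.reverse).length)).sum with hLsum
  have hnpos : (0:ℝ) < ((m * ℓ : ℕ) : ℝ) := by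
    have : 0 < m * ℓ := Nat.mul_pos hm hℓ
    exact_mod_cast this
  -- bound on rhoFS
  have hrho : rhoFS X Kℓ (List.ofFn x) * ((m * ℓ : ℕ) : ℝ) ≤ (Lsum : ℝ) := by
    have hmem : ((Lsum : ℝ) / ((m * ℓ : ℕ) : ℝ))
        ∈ {r : ℝ | ∃ E' : FSEncoder X Kℓ, E'.IL ∧
            r = (E'.codeLen (List.ofFn x) : ℝ) / (List.ofFn x).length} := by
      refine ⟨E, HMM.Enc_IL hα hK0 hKS g, ?_⟩
      rw [hcode, List.length_ofFn]
    have hbdd : BddBelow {r : ℝ | ∃ E' : FSEncoder X Kℓ, E'.IL ∧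
        r = (E'.codeLen (List.ofFn x) : ℝ) / (List.ofFn x).length} := by
      refine ⟨0, fun r hr => ?_⟩
      obtain ⟨E', -, rfl⟩ := hr
      positivity
    have h1 : rhoFS X Kℓ (List.ofFn x) ≤ (Lsum : ℝ) / ((m * ℓ : ℕ) : ℝ) :=
      csInf_le hbdd hmem
    calc rhoFS X Kℓ (List.ofFn x) * ((m * ℓ : ℕ) : ℝ)
        ≤ ((Lsum : ℝ) / ((m * ℓ : ℕ) : ℝ)) * ((m * ℓ : ℕ) : ℝ) :=
          mul_le_mul_of_nonneg_right h1 (le_of_lt hnpos)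
      _ = (Lsum : ℝ) := div_mul_cancel₀ _ (ne_of_gt hnpos)
  -- the total weight of g
  have hsum_g : ∑ v : Fin ℓ → X, g v = (s : ℝ) := by
    calc ∑ v : Fin ℓ → X, g v = ∑ v : Fin ℓ → X, HMM.Bf T (List.ofFn v) :=
          HMM.sum_ofFn_reverse (HMM.Bf T)
      _ = ∑ v : Fin ℓ → X, ∑ z : Z, HMM.pr T z (List.ofFn v) := rfl
      _ = ∑ z : Z, ∑ v : Fin ℓ → X, HMM.pr T z (List.ofFn v) := Finset.sum_comm
      _ = ∑ z : Z, 1 := Finset.sum_congr rfl fun z _ => HMM.sum_pr_ofFn hT0 hT1 ℓ z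
      _ = (s : ℝ) := by simp [hs]
  -- per-block bound
  have hblock : ∀ w ∈ ws, HMM.Bf T w * 2 ^ ((HMM.enc g w.reverse).length) ≤ (s:ℝ) := by
    intro w hw
    have hwl : w.reverse.length = ℓ := by rw [List.length_reverse]; exact hws2 w hw
    have h1 := HMM.enc_len_bound g hgn hwl
    rw [hsum_g] at h1
    have hgv : g (fun i => w.reverse.get (Fin.cast hwl.symm i)) = HMM.Bf T w := by
      rw [hg]
      show HMM.Bf T ((List.ofFn fun i => w.reverse.get (Fin.cast hwl.symm i)).reverse)
        = HMM.Bf T w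
      rw [HMM.ofFn_get_cast hwl, List.reverse_reverse]
    rwa [hgv] at h1
  -- product bound
  have hprod : (ws.map (HMM.Bf T)).prod * 2 ^ Lsum ≤ (s:ℝ) ^ m := by
    have h1 := HMM.prod_pow_le (c := (s:ℝ)) (by positivity) (HMM.Bf T)
      (fun w => (HMM.enc g w.reverse).length) (HMM.Bf_nonneg hT0) ws hblock
    rwa [hws1] at h1
  -- probability bound
  have hPle : P ≤ (ws.map (HMM.Bf T)).prod := by
    have h1 : P = HMM.pr T z1 (List.ofFn x) := HMM.hmm_eq_pr (m*ℓ) z1 x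
    rw [h1, ← hws3]
    exact HMM.pr_join_le hT0 ws z1
  have hfinal1 : P ≤ (s:ℝ)^m * ((2:ℝ)^Lsum)⁻¹ := by
    have h2pos : (0:ℝ) < 2 ^ Lsum := by positivity
    calc P ≤ (ws.map (HMM.Bf T)).prod := hPle
      _ ≤ (s:ℝ)^m / 2^Lsum := (le_div_iff₀ h2pos).2 hprod
      _ = (s:ℝ)^m * ((2:ℝ)^Lsum)⁻¹ := div_eq_mul_inv _ _
  have hLs : ((2:ℝ)^Lsum)⁻¹ = (2:ℝ) ^ (-(Lsum:ℝ)) := by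
    rw [← Real.rpow_natCast 2 Lsum, ← Real.rpow_neg (by norm_num : (0:ℝ) ≤ 2)]
  set R := rhoFS X Kℓ (List.ofFn x) with hR
  set c2 := 2 * (s:ℝ)^3 * Real.exp 1 with hc2
  have hspos : (0:ℝ) < (s:ℝ) := by exact_mod_cast hs1
  have hc2pos : 0 < c2 := by
    rw [hc2]
    exact mul_pos (mul_pos two_pos (pow_pos hspos 3)) (Real.exp_pos 1)
  have hsle : (s:ℝ) ≤ c2 := by
    have hsp : (1:ℝ) ≤ (s:ℝ) := by exact_mod_cast hs1
    have he : (1:ℝ) ≤ Real.exp 1 := by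
      have := Real.add_one_le_exp 1
      linarith
    have h3 : (s:ℝ) ≤ (s:ℝ)^3 := le_self_pow₀ (by linarith) (by norm_num)
    have h4 : (2:ℝ) * (s:ℝ)^3 * 1 ≤ 2 * (s:ℝ)^3 * Real.exp 1 :=
      mul_le_mul_of_nonneg_left he (by positivity)
    rw [hc2]
    linarith
  have hsm : (s:ℝ)^m ≤ (2:ℝ) ^ ((m:ℝ) * Real.logb 2 c2) := by
    calc (s:ℝ)^m ≤ c2^m := pow_le_pow_left₀ (le_of_lt hspos) hsle m
      _ = ((2:ℝ) ^ Real.logb 2 c2)^m := by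
          rw [Real.rpow_logb (by norm_num) (by norm_num) hc2pos]
      _ = (2:ℝ) ^ (Real.logb 2 c2 * (m:ℝ)) := by
          rw [← Real.rpow_natCast ((2:ℝ) ^ Real.logb 2 c2) m,
            ← Real.rpow_mul (by norm_num : (0:ℝ) ≤ 2)]
      _ = (2:ℝ) ^ ((m:ℝ) * Real.logb 2 c2) := by rw [mul_comm]
  have hexp : (2:ℝ) ^ (-(Lsum:ℝ)) ≤ (2:ℝ) ^ (-(((m * ℓ : ℕ) : ℝ) * R)) := by
    apply Real.rpow_le_rpow_of_exponent_le one_le_two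
    have : R * ((m * ℓ : ℕ) : ℝ) ≤ (Lsum : ℝ) := hrho
    nlinarith
  calc P ≤ (s:ℝ)^m * (2:ℝ)^(-(Lsum:ℝ)) := by rw [← hLs]; exact hfinal1
    _ ≤ (2:ℝ)^((m:ℝ) * Real.logb 2 c2) * (2:ℝ)^(-(((m * ℓ : ℕ) : ℝ) * R)) :=
        mul_le_mul hsm hexp (Real.rpow_nonneg (by norm_num) _)
          (Real.rpow_nonneg (by norm_num) _)
    _ = (2 : ℝ) ^ (-(((m * ℓ : ℕ) : ℝ) * R - (m : ℝ) * Real.logb 2 c2)) := by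
        rw [← Real.rpow_add two_pos]
        congr 1
        ring
end
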